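/- Let D be an integral domain with quotient field K and let 𝒯 = { T_λ : λ ∈ Λ } be a nonempty family of overrings of D. Let ∧_𝒯 be the semistar operation of D defined by E^{∧_𝒯} := ⋂_λ E·T_λ, and let ∧_{𝒯[X]} be the semistar operation of D[X] defined by A^{∧_{𝒯[X]}} := ⋂_λ A·T_λ[X]. Then ⋏^{∧_𝒯} ≤ ∧_{𝒯[X]} ≤ ▲^{∧_𝒯}. -/

import Mathlib

/- Preliminaries: semistar operations on an integral domain `R` with quotient field `F`
(submodules of `F` over `R`), polynomial extension of semistar operations from `D`
to `D[X]` (viewed inside the quotient field `K(X) = RatFunc K` of `D[X]`). -/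

open Polynomial Pointwise

set_option synthInstance.maxHeartbeats 1000000
set_option maxHeartbeats 1000000

open scoped Classical

noncomputable section

section Generic

variable (R F : Type*) [CommRing R] [Field F] [Algebra R F]

/-- `o` is a semistar operation of `R` (on the nonzero `R`-submodules of the
quotient field `F`). -/
def IsSemistarOp (o : Submodule R F → Submodule R F) : Prop :=
  (∀ x : F, x ≠ 0 → ∀ E : Submodule R F, E ≠ ⊥ → o (x • E) = x • o E) ∧
  (∀ E G : Submodule R F, E ≠ ⊥ → G ≠ ⊥ → E ≤ G → o E ≤ o G) ∧
  (∀ E : Submodule R F, E ≠ ⊥ → E ≤ o E) ∧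
  (∀ E : Submodule R F, E ≠ ⊥ → o (o E) = o E)

/-- The finite-type operation `⋆_f` associated to `⋆`:
`E^{⋆_f} = ⋃ { G^⋆ : G nonzero finitely generated, G ⊆ E }`. -/
def finTypeFun (o : Submodule R F → Submodule R F) : Submodule R F → Submodule R F :=
  fun E => ⨆ (G : Submodule R F) (_ : G ≠ ⊥) (_ : G.FG) (_ : G ≤ E), o G

/-- `⋆` is of finite type, i.e. `⋆ = ⋆_f`. -/
def IsFiniteTypeFun (o : Submodule R F → Submodule R F) : Prop :=
  ∀ E : Submodule R F, E ≠ ⊥ → o E = finTypeFun R F o E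

/-- `⋆` is stable: `(E ∩ G)^⋆ = E^⋆ ∩ G^⋆`. -/
def IsStableFun (o : Submodule R F → Submodule R F) : Prop :=
  ∀ E G : Submodule R F, E ≠ ⊥ → G ≠ ⊥ → o (E ⊓ G) = o E ⊓ o G

/-- An ideal of `R` viewed as an `R`-submodule of `F`. -/
def idealSub (J : Ideal R) : Submodule R F := Submodule.map (Algebra.linearMap R F) J

/-- `(E : J) = { x ∈ F : xJ ⊆ E }` for an ideal `J` of `R`. -/
def colonIdeal (E : Submodule R F) (J : Ideal R) : Submodule R F where
  carrier := { x : F | ∀ a ∈ J, a • x ∈ E }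
  add_mem' := fun {x y} hx hy a ha => by
    simpa [smul_add] using E.add_mem (hx a ha) (hy a ha)
  zero_mem' := fun a _ => by simpa using E.zero_mem
  smul_mem' := fun r x hx a ha => by
    rw [← mul_smul, mul_comm, mul_smul]
    exact E.smul_mem r (hx a ha)

/-- The stable finite-type operation `tilde ⋆` associated to `⋆`:
`E^{tilde ⋆} = ⋃ { (E : J) : J nonzero finitely generated integral ideal with J^⋆ = R^⋆ }`. -/
def tildeFun (o : Submodule R F → Submodule R F) : Submodule R F → Submodule R F :=
  fun E => ⨆ (J : Ideal R) (_ : J ≠ ⊥) (_ : J.FG)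
    (_ : o (idealSub R F J) = o (1 : Submodule R F)), colonIdeal R F E J

/-- The `v`-operation: `E^v = (R : (R : E))` for `E` a nonzero fractional ideal,
and `E^v = F` otherwise. -/
def vFun : Submodule R F → Submodule R F := fun E =>
  if ∃ d : R, d ≠ 0 ∧ ∀ x ∈ E, d • x ∈ (1 : Submodule R F) then
    (1 : Submodule R F) / ((1 : Submodule R F) / E)
  else ⊤

/-- The `eab` operation `⋆_a` associated to `⋆`. -/
def aFun (o : Submodule R F → Submodule R F) : Submodule R F → Submodule R F := fun E =>
  ⨆ (G : Submodule R F) (_ : G ≠ ⊥) (_ : G.FG) (_ : G ≤ E),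
    ⨆ (H : Submodule R F) (_ : H ≠ ⊥) (_ : H.FG), o (G * H) / o H

/-- `I` is a quasi-`⋆`-ideal: a nonzero integral ideal with `I^⋆ ∩ R = I`. -/
def isQuasiIdealFun (o : Submodule R F → Submodule R F) (I : Ideal R) : Prop :=
  I ≠ ⊥ ∧ (o (idealSub R F I)).comap (Algebra.linearMap R F) = I

/-- `I` is a quasi-`⋆`-maximal ideal: maximal among proper quasi-`⋆`-ideals. -/
def isQuasiMaximalFun (o : Submodule R F → Submodule R F) (I : Ideal R) : Prop :=
  isQuasiIdealFun R F o I ∧ I ≠ ⊤ ∧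
    ∀ J : Ideal R, isQuasiIdealFun R F o J → J ≠ ⊤ → I ≤ J → I = J

/-- The `v`-operation relative to an overring `R'` (an `R`-submodule of `F`):
`B ↦ (R' : (R' : B))` for `B` a nonzero fractional ideal of `R'`, `F` otherwise. -/
def vRelFun (R' B : Submodule R F) : Submodule R F :=
  if ∃ z ∈ R', z ≠ 0 ∧ ∀ x ∈ B, z * x ∈ R' then R' / (R' / B) else ⊤

/-- The `t`-operation relative to an overring `R'`: finite-type operation associated to
the `v`-operation of `R'` (the union being over nonzero finitely generated
`R'`-submodules contained in `B`). -/
def tRelFun (R' B : Submodule R F) : Submodule R F :=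
  ⨆ (G : Submodule R F) (_ : G ≠ ⊥)
    (_ : ∃ S : Finset F, G = R' * Submodule.span R (S : Set F)) (_ : G ≤ B),
    vRelFun R F R' G

end Generic

section Poly

variable (D K : Type*) [CommRing D] [IsDomain D] [Field K] [Algebra D K] [IsFractionRing D K]

/-- The canonical ring homomorphism `D[X] → K(X)`. -/
def polyToRF : Polynomial D →+* RatFunc K :=
  (algebraMap (Polynomial K) (RatFunc K)).comp (Polynomial.mapRingHom (algebraMap D K))

/-- `K(X)` is an algebra over `D[X]`; in fact it is the quotient field of `D[X]`. -/
instance (priority := 100) : Algebra (Polynomial D) (RatFunc K) := (polyToRF D K).toAlgebra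

/-- For a `D`-submodule `E` of `K`, the `D[X]`-submodule `E[X]` of `K(X)`:
polynomials all of whose coefficients lie in `E`. -/
def polyExt (E : Submodule D K) : Submodule (Polynomial D) (RatFunc K) where
  carrier := { f : RatFunc K | ∃ p : Polynomial K, (∀ n, p.coeff n ∈ E) ∧
      f = algebraMap (Polynomial K) (RatFunc K) p }
  add_mem' := by
    rintro f g ⟨p, hp, rfl⟩ ⟨q, hq, rfl⟩
    exact ⟨p + q, fun n => by simpa using E.add_mem (hp n) (hq n), by simp⟩
  zero_mem' := ⟨0, fun n => by simpa using E.zero_mem, by simp⟩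
  smul_mem' := by
    rintro c f ⟨p, hp, rfl⟩
    refine ⟨Polynomial.map (algebraMap D K) c * p, fun n => ?_, ?_⟩
    · rw [Polynomial.coeff_mul]
      refine Submodule.sum_mem E fun ij _ => ?_
      rw [Polynomial.coeff_map, ← Algebra.smul_def]
      exact E.smul_mem _ (hp ij.2)
    · rw [Algebra.smul_def, RingHom.algebraMap_toAlgebra, map_mul]
      unfold polyToRF
      simp

/-- The contraction `B ∩ K` of a `D[X]`-submodule `B` of `K(X)` to a `D`-submodule of `K`. -/
def contractToBase (B : Submodule (Polynomial D) (RatFunc K)) : Submodule D K where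
  carrier := { x : K | algebraMap K (RatFunc K) x ∈ B }
  add_mem' := fun {x y} hx hy => by
    simpa [Set.mem_setOf_eq, map_add] using B.add_mem hx hy
  zero_mem' := by simpa using B.zero_mem
  smul_mem' := fun d x hx => by
    have h : algebraMap K (RatFunc K) (d • x)
        = (Polynomial.C d : Polynomial D) • (algebraMap K (RatFunc K) x) := by
      rw [Algebra.smul_def d x, map_mul, Algebra.smul_def, RingHom.algebraMap_toAlgebra]
      unfold polyToRF
      simp only [RingHom.coe_comp, Function.comp_apply, Polynomial.coe_mapRingHom,
        Polynomial.map_C, RatFunc.algebraMap_C, RatFunc.algebraMap_eq_C]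
    show algebraMap K (RatFunc K) (d • x) ∈ B
    rw [h]
    exact B.smul_mem (Polynomial.C d) hx

/-- The content `c_D(S)`: the `D`-submodule of `K` generated by the coefficients of all
polynomials belonging to `S`. -/
def contentOf (S : Set (RatFunc K)) : Submodule D K :=
  Submodule.span D { x : K | ∃ p : Polynomial K,
    algebraMap (Polynomial K) (RatFunc K) p ∈ S ∧ ∃ n, p.coeff n = x }

/-- The semistar operation `▲^⋆_T` of `D[X]` associated to a semistar operation `⋆` of `D`
and an overring `T` of `D`:
`A ↦ ⋂ { z⁻¹ (c_D(zA))^⋆[X] : z ∈ (T[X] : A), z ≠ 0 }` if `(T[X] : A) ≠ 0`, else `A ↦ K(X)`. -/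
def bigTriT (o : Submodule D K → Submodule D K) (T : Subalgebra D K) :
    Submodule (Polynomial D) (RatFunc K) → Submodule (Polynomial D) (RatFunc K) := fun A =>
  if ∃ z : RatFunc K, z ≠ 0 ∧ ∀ a ∈ A, z * a ∈ polyExt D K (Subalgebra.toSubmodule T) then
    ⨅ (z : RatFunc K) (_ : z ≠ 0) (_ : ∀ a ∈ A, z * a ∈ polyExt D K (Subalgebra.toSubmodule T)),
      z⁻¹ • polyExt D K (o (contentOf D K (z • (A : Set (RatFunc K)))))
  else ⊤

/-- `▲^⋆ := ▲^⋆_K`, the largest strict extension of `⋆` to `D[X]`. -/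
def bigTri (o : Submodule D K → Submodule D K) :
    Submodule (Polynomial D) (RatFunc K) → Submodule (Polynomial D) (RatFunc K) :=
  bigTriT D K o ⊤

/-- `b` is an extension of `⋆` to `D[X]` : `E^⋆ = (E[X])^b ∩ K`. -/
def IsExtensionFun (o : Submodule D K → Submodule D K)
    (b : Submodule (Polynomial D) (RatFunc K) → Submodule (Polynomial D) (RatFunc K)) : Prop :=
  ∀ E : Submodule D K, E ≠ ⊥ → o E = contractToBase D K (b (polyExt D K E))

/-- `b` is a strict extension of `⋆` to `D[X]` : `(E[X])^b = E^⋆[X]`. -/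
def IsStrictExtensionFun (o : Submodule D K → Submodule D K)
    (b : Submodule (Polynomial D) (RatFunc K) → Submodule (Polynomial D) (RatFunc K)) : Prop :=
  ∀ E : Submodule D K, E ≠ ⊥ → b (polyExt D K E) = polyExt D K (o E)

/-- `⋏^⋆ : A ↦ ⋂ { A^★ : ★ a semistar operation of D[X] extending ⋆ }`. -/
def curlyFun (o : Submodule D K → Submodule D K) :
    Submodule (Polynomial D) (RatFunc K) → Submodule (Polynomial D) (RatFunc K) := fun A =>
  ⨅ (b : Submodule (Polynomial D) (RatFunc K) → Submodule (Polynomial D) (RatFunc K))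
    (_ : IsSemistarOp (Polynomial D) (RatFunc K) b) (_ : IsExtensionFun D K o b), b A

/-- The localization `D_Q` of `D` at a prime ideal `Q`, as a `D`-submodule of `K`. -/
def locSub (Q : Ideal D) : Submodule D K :=
  Submodule.span D { x : K | ∃ s : D, s ∉ Q ∧ s • x ∈ (1 : Submodule D K) }

/-- The content of an ideal `I` of `D[X]`: the `D`-submodule of `K` generated by the
coefficients of the polynomials in `I`. -/
def contentOfIdeal (I : Ideal (Polynomial D)) : Submodule D K :=
  Submodule.span D { x : K | ∃ p ∈ I, ∃ n, algebraMap D K (Polynomial.coeff p n) = x }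

/-- The Nagata ring `D_Q(X)`, as a subset of `K(X)`: fractions `f/g` with
`f, g ∈ D_Q[X]` and the coefficients of `g` generating the unit ideal of `D_Q`. -/
def nagataSet (Q : Ideal D) : Set (RatFunc K) :=
  { u : RatFunc K | ∃ g : Polynomial K, (∀ n, g.coeff n ∈ locSub D K Q) ∧
      locSub D K Q * Submodule.span D { x : K | ∃ n, g.coeff n = x } = locSub D K Q ∧
      u * algebraMap (Polynomial K) (RatFunc K) g ∈ polyExt D K (locSub D K Q) }

end Poly

/-! The operation `B ↦ ⋂_λ B·T_λ[X]` is itself a semistar operation of `D[X]`, and it extends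
`∧_𝒯` because `(E[X]·T[X]) ∩ K = E·T`; this gives the first inequality. For the second, if
`zA ⊆ K[X]` then `zA ⊆ c_D(zA)[X]`, so `z·(A·T_λ[X]) ⊆ (c_D(zA)·T_λ)[X]` for every `λ`, and
intersecting over the (nonempty) family lands in `(c_D(zA))^{∧_𝒯}[X]`. -/

section IsSemistarOp

variable {R F : Type*} [CommRing R] [Field F] [Algebra R F]

theorem Submodule.mem_smul_iff_inv_mul_mem₀ {x y : F} (hx : x ≠ 0) (B : Submodule R F) :
    y ∈ x • B ↔ x⁻¹ * y ∈ B := by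
  rw [← SetLike.mem_coe, Submodule.coe_pointwise_smul, Set.mem_smul_set_iff_inv_smul_mem₀ hx,
    smul_eq_mul, SetLike.mem_coe]

theorem Submodule.smul_iInf₀ {ι : Sort*} {x : F} (hx : x ≠ 0) (B : ι → Submodule R F) :
    x • ⨅ i, B i = ⨅ i, x • B i := by
  ext y
  simp only [Submodule.mem_iInf, Submodule.mem_smul_iff_inv_mul_mem₀ hx]

theorem isSemistarOp_iInf_mul {ι : Sort*} (M : ι → Submodule R F) (one_le : ∀ i, 1 ≤ M i)
    (mul_self_le : ∀ i, M i * M i ≤ M i) : IsSemistarOp R F fun B => ⨅ i, B * M i := by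
  have le_self : ∀ B : Submodule R F, B ≤ ⨅ i, B * M i := fun B =>
    le_iInf fun i => (mul_one B).symm.le.trans (mul_le_mul_right (one_le i) B)
  refine ⟨fun x hx B _ => ?_, fun B C _ _ hBC => iInf_mono fun i => mul_le_mul_left hBC _,
    fun B _ => le_self B, fun B _ => le_antisymm (le_iInf fun i => ?_) (le_self _)⟩
  · simp only [smul_mul_assoc, Submodule.smul_iInf₀ hx]
  · calc (⨅ j, (⨅ k, B * M k) * M j) ≤ (B * M i) * M i :=
          (iInf_le _ i).trans (mul_le_mul_left (iInf_le _ i) _)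
      _ = B * (M i * M i) := mul_assoc _ _ _
      _ ≤ B * M i := mul_le_mul_right (mul_self_le i) B

end IsSemistarOp

section PolyExt

variable {D K : Type*} [CommRing D] [Field K] [Algebra D K]

theorem mem_contractToBase {B : Submodule (Polynomial D) (RatFunc K)} {x : K} :
    x ∈ contractToBase D K B ↔ algebraMap K (RatFunc K) x ∈ B := Iff.rfl

theorem polyExt_mono {E F : Submodule D K} (h : E ≤ F) : polyExt D K E ≤ polyExt D K F := by
  rintro f ⟨p, hp, rfl⟩
  exact ⟨p, fun n => h (hp n), rfl⟩

theorem polyExt_mul_le (E F : Submodule D K) :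
    polyExt D K E * polyExt D K F ≤ polyExt D K (E * F) := by
  rw [Submodule.mul_le]
  rintro _ ⟨p, hp, rfl⟩ _ ⟨q, hq, rfl⟩
  refine ⟨p * q, fun n => ?_, (map_mul _ p q).symm⟩
  rw [Polynomial.coeff_mul]
  exact Submodule.sum_mem _ fun ij _ => Submodule.mul_mem_mul (hp ij.1) (hq ij.2)

theorem algebraMap_mem_polyExt_iff {E : Submodule D K} {x : K} :
    algebraMap K (RatFunc K) x ∈ polyExt D K E ↔ x ∈ E := by
  have hC : algebraMap K (RatFunc K) x = algebraMap (Polynomial K) (RatFunc K) (C x) :=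
    (RatFunc.algebraMap_C x).symm
  constructor
  · rintro ⟨p, hp, hxp⟩
    have hp_eq : C x = p := RatFunc.algebraMap_injective K (hC.symm.trans hxp)
    simpa [← hp_eq] using hp 0
  · intro hx
    refine ⟨C x, fun n => ?_, hC⟩
    rw [coeff_C]
    split_ifs
    exacts [hx, E.zero_mem]

theorem polyExt_iInf {ι : Sort*} [Nonempty ι] (E : ι → Submodule D K) :
    polyExt D K (⨅ i, E i) = ⨅ i, polyExt D K (E i) := by
  refine le_antisymm (le_iInf fun i => polyExt_mono (iInf_le E i)) fun f hf => ?_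
  obtain ⟨i₀⟩ := ‹Nonempty ι›
  obtain ⟨p, -, rfl⟩ := Submodule.mem_iInf _ |>.1 hf i₀
  refine ⟨p, fun n => Submodule.mem_iInf _ |>.2 fun i => ?_, rfl⟩
  obtain ⟨q, hq, hqp⟩ := Submodule.mem_iInf _ |>.1 hf i
  rw [RatFunc.algebraMap_injective K hqp]
  exact hq n

theorem one_le_polyExt (S : Subalgebra D K) : 1 ≤ polyExt D K (Subalgebra.toSubmodule S) := by
  refine Submodule.one_le.2 ⟨1, fun n => ?_, (map_one _).symm⟩
  rw [coeff_one]
  split_ifs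
  exacts [S.one_mem, S.zero_mem]

theorem polyExt_mul_self_le (S : Subalgebra D K) :
    polyExt D K (Subalgebra.toSubmodule S) * polyExt D K (Subalgebra.toSubmodule S) ≤
      polyExt D K (Subalgebra.toSubmodule S) :=
  (polyExt_mul_le _ _).trans (polyExt_mono (Submodule.mul_le.2 fun _ hx _ hy => S.mul_mem hx hy))

theorem algebraMap_mem_polyExt_mul_iff {E N : Submodule D K} {x : K} :
    algebraMap K (RatFunc K) x ∈ polyExt D K E * polyExt D K N ↔ x ∈ E * N := by
  refine ⟨fun hx => algebraMap_mem_polyExt_iff.1 (polyExt_mul_le E N hx), fun hx => ?_⟩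
  induction hx using Submodule.mul_induction_on' with
  | mem_mul_mem e he n hn =>
    rw [map_mul]
    exact Submodule.mul_mem_mul (algebraMap_mem_polyExt_iff.2 he) (algebraMap_mem_polyExt_iff.2 hn)
  | add y w _ _ hy hw => rw [map_add]; exact add_mem hy hw

theorem isExtensionFun_iInf_mul_polyExt {ι : Sort*} (N : ι → Submodule D K) :
    IsExtensionFun D K (fun E => ⨅ i, E * N i) fun B => ⨅ i, B * polyExt D K (N i) := by
  intro E _
  ext x
  simp only [mem_contractToBase, Submodule.mem_iInf, algebraMap_mem_polyExt_mul_iff]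

theorem curlyFun_le_of_isExtensionFun {o : Submodule D K → Submodule D K}
    {b : Submodule (Polynomial D) (RatFunc K) → Submodule (Polynomial D) (RatFunc K)}
    (hb : IsSemistarOp (Polynomial D) (RatFunc K) b) (hext : IsExtensionFun D K o b)
    (A : Submodule (Polynomial D) (RatFunc K)) : curlyFun D K o A ≤ b A :=
  iInf_le_of_le b <| iInf_le_of_le hb <| iInf_le _ hext

theorem mem_polyExt_contentOf {S : Set (RatFunc K)} {E : Submodule D K} {f : RatFunc K}
    (hfS : f ∈ S) (hfE : f ∈ polyExt D K E) : f ∈ polyExt D K (contentOf D K S) := by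
  obtain ⟨p, -, rfl⟩ := hfE
  exact ⟨p, fun n => Submodule.subset_span ⟨p, hfS, n, rfl⟩, rfl⟩

theorem mul_mem_polyExt_contentOf_mul {A : Submodule (Polynomial D) (RatFunc K)}
    {E N : Submodule D K} {z f : RatFunc K} (hz : ∀ a ∈ A, z * a ∈ polyExt D K E)
    (hf : f ∈ A * polyExt D K N) :
    z * f ∈ polyExt D K (contentOf D K (z • (A : Set (RatFunc K))) * N) := by
  induction hf using Submodule.mul_induction_on' with
  | mem_mul_mem a ha g hg =>
    rw [← mul_assoc]
    exact polyExt_mul_le _ _ <| Submodule.mul_mem_mul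
      (mem_polyExt_contentOf (Set.smul_mem_smul_set ha) (hz a ha)) hg
  | add y w _ _ hy hw => rw [mul_add]; exact add_mem hy hw

theorem iInf_mul_polyExt_le_bigTri {ι : Sort*} [Nonempty ι] (N : ι → Submodule D K)
    (A : Submodule (Polynomial D) (RatFunc K)) :
    ⨅ i, A * polyExt D K (N i) ≤ bigTri D K (fun E => ⨅ i, E * N i) A := by
  unfold bigTri bigTriT
  split_ifs
  · refine le_iInf₂ fun z hz => le_iInf fun hzA f hf => ?_
    rw [Submodule.mem_smul_iff_inv_mul_mem₀ (inv_ne_zero hz), inv_inv, polyExt_iInf,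
      Submodule.mem_iInf]
    exact fun i => mul_mem_polyExt_contentOf_mul hzA (Submodule.mem_iInf _ |>.1 hf i)
  · exact le_top

end PolyExt

theorem curly_family_of_overrings_general (D K : Type*) [CommRing D] [Field K] [Algebra D K]
    {ι : Type*} [Nonempty ι] (T : ι → Subalgebra D K) :
    ∀ A : Submodule (Polynomial D) (RatFunc K), A ≠ ⊥ →
      curlyFun D K (fun E => ⨅ i, E * Subalgebra.toSubmodule (T i)) A ≤
        (⨅ i, A * polyExt D K (Subalgebra.toSubmodule (T i))) ∧
      (⨅ i, A * polyExt D K (Subalgebra.toSubmodule (T i))) ≤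
        bigTri D K (fun E => ⨅ i, E * Subalgebra.toSubmodule (T i)) A := by
  intro A _
  have hsemistar := isSemistarOp_iInf_mul (fun i => polyExt D K (Subalgebra.toSubmodule (T i)))
    (fun i => one_le_polyExt (T i)) (fun i => polyExt_mul_self_le (T i))
  exact ⟨curlyFun_le_of_isExtensionFun hsemistar (isExtensionFun_iInf_mul_polyExt _) A,
    iInf_mul_polyExt_le_bigTri _ A⟩

theorem curly_family_of_overrings (D K : Type*) [CommRing D] [IsDomain D] [Field K] [Algebra D K] [IsFractionRing D K]
    {ι : Type*} [Nonempty ι] (T : ι → Subalgebra D K) :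
    ∀ A : Submodule (Polynomial D) (RatFunc K), A ≠ ⊥ →
      curlyFun D K (fun E => ⨅ i, E * Subalgebra.toSubmodule (T i)) A ≤
        (⨅ i, A * polyExt D K (Subalgebra.toSubmodule (T i))) ∧
      (⨅ i, A * polyExt D K (Subalgebra.toSubmodule (T i))) ≤
        bigTri D K (fun E => ⨅ i, E * Subalgebra.toSubmodule (T i)) A :=
  curly_family_of_overrings_general D K T
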